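/- Let p be a prime, k ≥ 2 an integer, and f ∈ ℤ[x] not identically zero modulo p. If ζ₀ ∈ {0,…,p−1} is a root of the mod-p reduction f̃ with s := s(f,ζ₀) ∈ {2,…,k−1}, then the number of ζ ∈ ℤ/(p^k) with ζ ≡ ζ₀ (mod p) and f(ζ) ≡ 0 (mod p^k) equals p^{s−1} · N_{p,k−s}( f_{1,ζ₀} ). -/

import Mathlib

open Polynomial

/-- `N_{p,k}(f)`: the number of residues `ζ ∈ ℤ/(p^k)` with `f(ζ) ≡ 0 (mod p^k)`. -/
def Npk (p k : ℕ) (f : Polynomial ℤ) : ℕ :=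
  ((Finset.range (p ^ k)).filter fun ζ : ℕ => (p : ℤ) ^ k ∣ f.eval (ζ : ℤ)).card

/-- `s(f,ζ₀) = min_{i ≥ 0} (i + ord_p(f⁽ⁱ⁾(ζ₀)/i!))`, where `f⁽ⁱ⁾(ζ₀)/i!` is the
coefficient of `x^i` in `f(ζ₀+x)`; the minimum ranges over `i` with nonzero coefficient. -/
noncomputable def sVal (p : ℕ) (f : Polynomial ℤ) (ζ₀ : ℤ) : ℕ :=
  sInf {n : ℕ | ∃ i : ℕ, (f.comp (X + C ζ₀)).coeff i ≠ 0 ∧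
    n = i + padicValInt p ((f.comp (X + C ζ₀)).coeff i)}

/-- Coefficientwise exact division of a polynomial by a constant. -/
noncomputable def divC (c : ℤ) (f : Polynomial ℤ) : Polynomial ℤ :=
  f.sum fun n a => C (a / c) * X ^ n

/-- `f_{1,ζ₀}(x) := f(ζ₀ + p·x) / p^{s(f,ζ₀)}`. -/
noncomputable def fOne (p : ℕ) (f : Polynomial ℤ) (ζ₀ : ℤ) : Polynomial ℤ :=
  divC ((p : ℤ) ^ sVal p f ζ₀) (f.comp (C (p : ℤ) * X + C ζ₀))

/-!
Writing a lift of `ζ₀` as `ζ₀ + p t`, every Taylor coefficient of `f(ζ₀ + p x)` is divisible by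
`p^s`, so `f(ζ₀ + p t) = p^s f₁(t)` and `p^k ∣ f(ζ₀ + p t)` iff `p^(k-s) ∣ f₁(t)`. Lifts modulo
`p^k` correspond to `t` modulo `p^(k-1)`, and the condition on `t` only depends on `t` modulo
`p^(k-s)`; hence each of the `N_{p,k-s}(f₁)` solutions is counted `p^(s-1)` times.
-/

open Finset Function

lemma coeff_divC (c : ℤ) (f : ℤ[X]) (n : ℕ) : (divC c f).coeff n = f.coeff n / c := by
  simp +contextual [divC, Polynomial.sum]

lemma C_mul_divC {c : ℤ} {f : ℤ[X]} (h : ∀ n, c ∣ f.coeff n) : C c * divC c f = f := by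
  ext n
  rw [coeff_C_mul, coeff_divC, Int.mul_ediv_cancel' (h n)]

lemma sVal_le {p : ℕ} {f : ℤ[X]} {ζ₀ : ℤ} {i : ℕ} (hi : (f.comp (X + C ζ₀)).coeff i ≠ 0) :
    sVal p f ζ₀ ≤ i + padicValInt p ((f.comp (X + C ζ₀)).coeff i) :=
  Nat.sInf_le ⟨i, hi, rfl⟩

lemma pow_sVal_dvd_coeff_comp (p : ℕ) (f : ℤ[X]) (ζ₀ : ℤ) (n : ℕ) :
    (p : ℤ) ^ sVal p f ζ₀ ∣ (f.comp (C (p : ℤ) * X + C ζ₀)).coeff n := by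
  have hcomp : f.comp (C (p : ℤ) * X + C ζ₀) = (f.comp (X + C ζ₀)).comp (C (p : ℤ) * X) := by
    rw [Polynomial.comp_assoc]
    simp [add_comp]
  rw [hcomp, comp_C_mul_X_coeff]
  set a := (f.comp (X + C ζ₀)).coeff n
  rcases eq_or_ne a 0 with ha | ha
  · simp [ha]
  calc (p : ℤ) ^ sVal p f ζ₀ ∣ (p : ℤ) ^ (padicValInt p a + n) :=
        pow_dvd_pow _ ((sVal_le ha).trans_eq (add_comm _ _))
    _ ∣ a * (p : ℤ) ^ n := by
        rw [pow_add]
        exact mul_dvd_mul_right (padicValInt_dvd a) _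

lemma pow_sVal_mul_eval_fOne (p : ℕ) (f : ℤ[X]) (ζ₀ t : ℤ) :
    (p : ℤ) ^ sVal p f ζ₀ * (fOne p f ζ₀).eval t = f.eval (ζ₀ + p * t) := by
  rw [← eval_C_mul, fOne, C_mul_divC (pow_sVal_dvd_coeff_comp p f ζ₀), eval_comp]
  simp [add_comm]

lemma pow_dvd_eval_add_mul_iff {p : ℕ} (hp : p ≠ 0) (f : ℤ[X]) (ζ₀ t : ℤ) {k : ℕ}
    (hk : sVal p f ζ₀ ≤ k) :
    (p : ℤ) ^ k ∣ f.eval (ζ₀ + p * t) ↔ (p : ℤ) ^ (k - sVal p f ζ₀) ∣ (fOne p f ζ₀).eval t := by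
  rw [← pow_sVal_mul_eval_fOne, ← Nat.add_sub_cancel' hk, pow_add, Nat.add_sub_cancel_left]
  exact mul_dvd_mul_iff_left (pow_ne_zero _ (Int.natCast_ne_zero.mpr hp))

lemma periodic_dvd_eval (g : ℤ[X]) {d : ℤ} {n : ℕ} (hd : d ∣ n) :
    Periodic (fun t : ℕ => d ∣ g.eval (t : ℤ)) n := fun t => by
  refine propext (dvd_iff_dvd_of_dvd_sub (hd.trans ?_))
  simpa using sub_dvd_eval_sub ((t + n : ℕ) : ℤ) t g

lemma Function.Periodic.count_mul {P : ℕ → Prop} [DecidablePred P] {n : ℕ} (hP : Periodic P n)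
    (m : ℕ) : Nat.count P (n * m) = Nat.count P n * m := by
  induction m with
  | zero => simp
  | succ m ih =>
    have hshift : ∀ k, P (n * m + k) = P k := fun k => by
      simpa [add_comm, mul_comm] using hP.nat_mul m k
    rw [mul_add_one, Nat.count_add, ih, mul_add_one]
    simp only [hshift]

lemma card_filter_mod_eq {n r : ℕ} (hr : r < n) (m : ℕ) (P : ℕ → Prop) [DecidablePred P] :
    #{x ∈ range (n * m) | x % n = r ∧ P x} = #{t ∈ range m | P (r + n * t)} := by
  have hn : 0 < n := by omega
  refine card_nbij' (· / n) (r + n * ·) ?_ ?_ ?_ ?_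
  · intro x hx
    simp only [mem_coe, mem_filter, mem_range] at hx ⊢
    obtain ⟨hx, rfl, hPx⟩ := hx
    exact ⟨Nat.div_lt_of_lt_mul hx, by rwa [Nat.mod_add_div]⟩
  · intro t ht
    simp only [mem_coe, mem_filter, mem_range] at ht ⊢
    refine ⟨?_, by simp [Nat.mod_eq_of_lt hr], ht.2⟩
    nlinarith
  · intro x hx
    simp only [mem_coe, mem_filter] at hx
    rw [← hx.2.1]
    exact Nat.mod_add_div x n
  · intro t _
    simp [Nat.add_mul_div_left _ _ hn, Nat.div_eq_of_lt hr]

theorem lifts_card_of_sVal_mid_general (p : ℕ) (hp : p.Prime) (k : ℕ)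
    (f : Polynomial ℤ)
    (ζ₀ : ℤ) (hζ₀0 : 0 ≤ ζ₀) (hζ₀1 : ζ₀ < (p : ℤ))
    (hs2 : 2 ≤ sVal p f ζ₀) (hsk : sVal p f ζ₀ ≤ k - 1) :
    ((Finset.range (p ^ k)).filter fun ζ : ℕ =>
        (p : ℤ) ∣ ((ζ : ℤ) - ζ₀) ∧ (p : ℤ) ^ k ∣ f.eval (ζ : ℤ)).card
      = p ^ (sVal p f ζ₀ - 1) * Npk p (k - sVal p f ζ₀) (fOne p f ζ₀) := by
  lift ζ₀ to ℕ using hζ₀0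
  have hζ₀p : ζ₀ < p := by exact_mod_cast hζ₀1
  set s := sVal p f ζ₀
  have hpk : p ^ k = p * p ^ (k - 1) := by rw [← pow_succ']; congr 1; omega
  have hpk1 : p ^ (k - 1) = p ^ (k - s) * p ^ (s - 1) := by rw [← pow_add]; congr 1; omega
  calc _ = #{x ∈ range (p * p ^ (k - 1)) | x % p = ζ₀ ∧ (p : ℤ) ^ k ∣ f.eval (x : ℤ)} := by
          rw [hpk]
          refine congrArg card (filter_congr fun x _ => and_congr_left' ?_)
          rw [← Nat.modEq_iff_dvd, Nat.ModEq, Nat.mod_eq_of_lt hζ₀p, eq_comm]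
    _ = #{t ∈ range (p ^ (k - s) * p ^ (s - 1)) |
          (p : ℤ) ^ (k - s) ∣ (fOne p f ζ₀).eval ((t : ℕ) : ℤ)} := by
          rw [card_filter_mod_eq hζ₀p, hpk1]
          refine congrArg card (filter_congr fun t _ => ?_)
          push_cast
          exact pow_dvd_eval_add_mul_iff hp.ne_zero f _ _ (by omega)
    _ = _ := by
          rw [← Nat.count_eq_card_filter_range, (periodic_dvd_eval _ (by push_cast; rfl)).count_mul,
            Nat.count_eq_card_filter_range, mul_comm, Npk]

/-- If `ζ₀` is a root of the mod-`p` reduction of `f` with `2 ≤ s(f,ζ₀) ≤ k-1`, then the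
number of lifts of `ζ₀` to roots of `f` in `ℤ/(p^k)` is `p^{s-1}·N_{p,k-s}(f_{1,ζ₀})`. -/
theorem lifts_card_of_sVal_mid (p : ℕ) (hp : p.Prime) (k : ℕ) (hk : 2 ≤ k)
    (f : Polynomial ℤ) (hf : f.map (Int.castRingHom (ZMod p)) ≠ 0)
    (ζ₀ : ℤ) (hζ₀0 : 0 ≤ ζ₀) (hζ₀1 : ζ₀ < (p : ℤ))
    (hroot : (p : ℤ) ∣ f.eval ζ₀)
    (hs2 : 2 ≤ sVal p f ζ₀) (hsk : sVal p f ζ₀ ≤ k - 1) :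
    ((Finset.range (p ^ k)).filter fun ζ : ℕ =>
        (p : ℤ) ∣ ((ζ : ℤ) - ζ₀) ∧ (p : ℤ) ^ k ∣ f.eval (ζ : ℤ)).card
      = p ^ (sVal p f ζ₀ - 1) * Npk p (k - sVal p f ζ₀) (fOne p f ζ₀) :=
  lifts_card_of_sVal_mid_general p hp k f ζ₀ hζ₀0 hζ₀1 hs2 hsk
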